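/- Let A be a matrix in the SO(6)-conjugation orbit of J₀ (an orthogonal almost complex structure compatible with the standard orientation). Then A commutes with every torus element R(θ₁)⊕R(θ₂)⊕R(θ₃) if and only if A = ε₁E₁₂ + ε₂E₃₄ + ε₃E₅₆ for signs ε₁, ε₂, ε₃ ∈ {−1,1} with ε₁ε₂ε₃ = 1. In particular the fixed points of the maximal torus on this orbit are exactly the four matrices projecting to the vertices (1,1,1), (1,−1,−1), (−1,1,−1), (−1,−1,1) of the moment tetrahedron. -/

import Mathlib

/-!
Commuting with `T3 π 0 0 = diag(-1,-1,1,1,1,1)` and `T3 0 π 0 = diag(1,1,-1,-1,1,1)` forces the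
skew-symmetric matrix `A = P J₀ Pᵀ` to be `ε₁E₁₂ + ε₂E₃₄ + ε₃E₅₆`, and `A² = -1` gives `εᵢ = ±1`.
Conjugation by `S = diag(1, ε₁, 1, ε₂, 1, ε₃)` carries `A` back to `J₀`, so the orthogonal matrix
`S P` commutes with `J₀`. A real matrix commuting with `J₀` is complex linear, so its determinant
is `|det_ℂ|² ≥ 0`; as `det (S P) = ε₁ε₂ε₃ = ±1`, the product of the signs is `1`.
-/

open Matrix

noncomputable section

/-- The skew-symmetric matrix of the 2-form `eⁱ ∧ eʲ`. -/
def E (i j : Fin 6) : Matrix (Fin 6) (Fin 6) ℝ := fun k l =>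
  (if k = j ∧ l = i then (1 : ℝ) else 0) - (if k = i ∧ l = j then (1 : ℝ) else 0)

/-- The standard orthogonal complex structure `J₀ = E₁₂ + E₃₄ + E₅₆`. -/
def J₀ : Matrix (Fin 6) (Fin 6) ℝ := E 0 1 + E 2 3 + E 4 5

/-- The element `R(θ₁) ⊕ R(θ₂) ⊕ R(θ₃)` of the maximal torus `T³ ⊂ SO(6)`. -/
def T3 (θ₁ θ₂ θ₃ : ℝ) : Matrix (Fin 6) (Fin 6) ℝ :=
  !![Real.cos θ₁, -Real.sin θ₁, 0, 0, 0, 0;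
     Real.sin θ₁,  Real.cos θ₁, 0, 0, 0, 0;
     0, 0, Real.cos θ₂, -Real.sin θ₂, 0, 0;
     0, 0, Real.sin θ₂,  Real.cos θ₂, 0, 0;
     0, 0, 0, 0, Real.cos θ₃, -Real.sin θ₃;
     0, 0, 0, 0, Real.sin θ₃,  Real.cos θ₃]

namespace Matrix

section Blocks

variable {n : Type*} [Fintype n] [DecidableEq n]

open Complex ComplexConjugate in
theorem det_fromBlocks_neg_eq_normSq (X Y : Matrix n n ℝ) :
    (fromBlocks X (-Y) Y X).det = normSq (X.map ofRealHom + I • Y.map ofRealHom).det := by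
  set Z := X.map ofRealHom + I • Y.map ofRealHom
  have hZbar : (X.map ofRealHom - I • Y.map ofRealHom).det = conj Z.det := by
    rw [RingHom.map_det]
    congr 1
    ext i j
    simp [Z, sub_eq_add_neg]
  have htri : fromBlocks 1 (I • 1) 0 1 * (fromBlocks X (-Y) Y X).map ofRealHom *
      fromBlocks 1 (-I • 1) 0 1 =
      fromBlocks Z 0 (Y.map ofRealHom) (X.map ofRealHom - I • Y.map ofRealHom) := by
    simp only [fromBlocks_map, Matrix.map_neg _ (map_neg ofRealHom), fromBlocks_multiply]
    congr 1 <;> ext i j <;> simp [Z]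
    · linear_combination (-(Y i j : ℂ)) * I_sq
    · ring
  apply ofReal_injective
  rw [← ofRealHom_eq_coe, RingHom.map_det, RingHom.mapMatrix_apply, ← mul_conj, ← hZbar,
    ← det_fromBlocks_zero₁₂, ← htri]
  simp

theorem det_fromBlocks_neg_nonneg (X Y : Matrix n n ℝ) : 0 ≤ (fromBlocks X (-Y) Y X).det :=
  det_fromBlocks_neg_eq_normSq X Y ▸ Complex.normSq_nonneg _

theorem eq_fromBlocks_of_commute_fromBlocks {R : Type*} [Ring R] {M : Matrix (n ⊕ n) (n ⊕ n) R}
    (h : Commute M (fromBlocks 0 (-1) 1 0)) :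
    M = fromBlocks M.toBlocks₁₁ (-M.toBlocks₂₁) M.toBlocks₂₁ M.toBlocks₁₁ := by
  rw [commute_iff_eq, ← fromBlocks_toBlocks M, fromBlocks_multiply, fromBlocks_multiply,
    fromBlocks_inj] at h
  simp only [mul_zero, mul_neg, mul_one, zero_add, add_zero, zero_mul, neg_mul, one_mul] at h
  conv_lhs => rw [← fromBlocks_toBlocks M]
  rw [h.1, ← h.2.2.1]

end Blocks

theorem commute_of_mul_mul_transpose_eq {n R : Type*} [Fintype n] [DecidableEq n] [CommRing R]
    {Q J : Matrix n n R} (hQ : Q * Qᵀ = 1) (h : Q * J * Qᵀ = J) : Commute Q J :=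
  calc Q * J = Q * J * (Qᵀ * Q) := by rw [mul_eq_one_comm.mp hQ, Matrix.mul_one]
    _ = J * Q := by rw [← Matrix.mul_assoc, h]

theorem apply_eq_zero_of_commute_diagonal {n R : Type*} [Fintype n] [DecidableEq n] [CommRing R]
    [NoZeroDivisors R] {M : Matrix n n R} {d : n → R} (h : Commute M (diagonal d)) {i j : n}
    (hij : d i ≠ d j) : M i j = 0 := by
  have hij' := congrFun (congrFun h i) j
  rw [mul_diagonal, diagonal_mul] at hij'
  have : M i j * (d j - d i) = 0 := by rw [mul_sub, hij', mul_comm, sub_self]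
  exact (mul_eq_zero.mp this).resolve_right (sub_ne_zero.mpr hij.symm)

end Matrix

def evenOddEquiv : Fin 6 ≃ Fin 3 ⊕ Fin 3 where
  toFun := ![.inl 0, .inr 0, .inl 1, .inr 1, .inl 2, .inr 2]
  invFun := Sum.elim ![0, 2, 4] ![1, 3, 5]
  left_inv := by decide
  right_inv := by decide

theorem J₀_submatrix_evenOddEquiv :
    J₀.submatrix evenOddEquiv.symm evenOddEquiv.symm = fromBlocks 0 (-1) 1 0 := by
  ext (i | i) (j | j) <;> fin_cases i <;> fin_cases j <;> simp [evenOddEquiv, J₀, E]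

theorem det_nonneg_of_commute_J₀ {M : Matrix (Fin 6) (Fin 6) ℝ} (h : Commute M J₀) :
    0 ≤ M.det := by
  set e := evenOddEquiv.symm
  have hblock : Commute (M.submatrix e e) (fromBlocks 0 (-1) 1 0) := by
    rw [← J₀_submatrix_evenOddEquiv, commute_iff_eq, submatrix_mul_equiv _ _ _ e, h.eq,
      ← submatrix_mul_equiv _ _ _ e]
  rw [← det_submatrix_equiv_self e, eq_fromBlocks_of_commute_fromBlocks hblock]
  exact det_fromBlocks_neg_nonneg _ _

theorem J₀_mul_self : J₀ * J₀ = -1 := by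
  ext i j
  fin_cases i <;> fin_cases j <;> simp [J₀, E, mul_apply, one_apply]

theorem J₀_transpose : J₀ᵀ = -J₀ := by
  ext i j
  fin_cases i <;> fin_cases j <;> simp [J₀, E]

theorem conj_J₀_mul_self {P : Matrix (Fin 6) (Fin 6) ℝ} (hP : P * Pᵀ = 1) :
    P * J₀ * Pᵀ * (P * J₀ * Pᵀ) = -1 :=
  calc P * J₀ * Pᵀ * (P * J₀ * Pᵀ) = P * J₀ * (Pᵀ * P) * J₀ * Pᵀ := by
        simp only [Matrix.mul_assoc]
    _ = -1 := by
        rw [mul_eq_one_comm.mp hP, Matrix.mul_one, Matrix.mul_assoc P, J₀_mul_self,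
          Matrix.mul_neg, Matrix.mul_one, Matrix.neg_mul, hP]

theorem conj_J₀_transpose (P : Matrix (Fin 6) (Fin 6) ℝ) :
    (P * J₀ * Pᵀ)ᵀ = -(P * J₀ * Pᵀ) := by
  simp [transpose_mul, J₀_transpose, Matrix.mul_assoc]

theorem T3_pi_zero_zero : T3 Real.pi 0 0 = diagonal ![-1, -1, 1, 1, 1, 1] := by
  ext i j; fin_cases i <;> fin_cases j <;> simp [T3]

theorem T3_zero_pi_zero : T3 0 Real.pi 0 = diagonal ![1, 1, -1, -1, 1, 1] := by
  ext i j; fin_cases i <;> fin_cases j <;> simp [T3]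

theorem eq_sum_E_of_commute_sign_diagonals {A : Matrix (Fin 6) (Fin 6) ℝ} (hskew : Aᵀ = -A)
    (h₁ : Commute A (diagonal ![-1, -1, 1, 1, 1, 1]))
    (h₂ : Commute A (diagonal ![1, 1, -1, -1, 1, 1])) :
    A = A 1 0 • E 0 1 + A 3 2 • E 2 3 + A 5 4 • E 4 5 := by
  have hA (i j : Fin 6) : A i j = -A j i := congrFun (congrFun hskew j) i
  have hdiag (i : Fin 6) : A i i = 0 := by linarith [hA i i]
  have hz₁ {i j : Fin 6} := apply_eq_zero_of_commute_diagonal h₁ (i := i) (j := j)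
  have hz₂ {i j : Fin 6} := apply_eq_zero_of_commute_diagonal h₂ (i := i) (j := j)
  ext i j
  fin_cases i <;> fin_cases j <;> simp [E] <;>
    first
    | exact hdiag _
    | exact hA _ _
    | (apply hz₁; simp; norm_num; done)
    | (apply hz₂; simp; norm_num)

theorem mul_self_eq_one_of_sum_E_mul_self_eq_neg_one {a b c : ℝ}
    (h : (a • E 0 1 + b • E 2 3 + c • E 4 5) * (a • E 0 1 + b • E 2 3 + c • E 4 5) = -1) :
    a * a = 1 ∧ b * b = 1 ∧ c * c = 1 := by
  have hentry (i : Fin 6) := congrFun (congrFun h i) i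
  refine ⟨?_, ?_, ?_⟩ <;> [have := hentry 0; have := hentry 2; have := hentry 4] <;>
    simp [E, mul_apply] at this <;> linarith

theorem sign_diagonal_conj_sum_E {a b c : ℝ} (ha : a * a = 1) (hb : b * b = 1) (hc : c * c = 1) :
    diagonal ![1, a, 1, b, 1, c] * (a • E 0 1 + b • E 2 3 + c • E 4 5) *
      diagonal ![1, a, 1, b, 1, c] = J₀ := by
  ext i j
  fin_cases i <;> fin_cases j <;> simp [diagonal_mul, mul_diagonal, E, J₀, ha, hb, hc]

theorem prod_eq_one_of_conj_J₀_eq_sum_E {P : Matrix (Fin 6) (Fin 6) ℝ} (hP : P * Pᵀ = 1)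
    (hdet : P.det = 1) {a b c : ℝ} (ha : a * a = 1) (hb : b * b = 1) (hc : c * c = 1)
    (h : P * J₀ * Pᵀ = a • E 0 1 + b • E 2 3 + c • E 4 5) : a * b * c = 1 := by
  set S : Matrix (Fin 6) (Fin 6) ℝ := diagonal ![1, a, 1, b, 1, c]
  have hS : S * Sᵀ = 1 := by
    ext i j
    fin_cases i <;> fin_cases j <;> simp [S, ha, hb, hc]
  have hSP : S * P * (S * P)ᵀ = 1 := by
    rw [transpose_mul, Matrix.mul_assoc, ← Matrix.mul_assoc P, hP, Matrix.one_mul, hS]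
  have hSPJ : S * P * J₀ * (S * P)ᵀ = J₀ :=
    calc S * P * J₀ * (S * P)ᵀ = S * (P * J₀ * Pᵀ) * S := by
          rw [transpose_mul, show Sᵀ = S from diagonal_transpose _]
          simp only [Matrix.mul_assoc]
      _ = J₀ := by rw [h]; exact sign_diagonal_conj_sum_E ha hb hc
  have hdetSP : (S * P).det = a * b * c := by
    simp [S, det_diagonal, Fin.prod_univ_six, hdet]
  have hpos := hdetSP ▸ det_nonneg_of_commute_J₀ (commute_of_mul_mul_transpose_eq hSP hSPJ)
  have hsq : a * b * c * (a * b * c) = 1 := by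
    linear_combination (b * b * (c * c)) * ha + c * c * hb + hc
  rcases mul_self_eq_one_iff.mp hsq with hone | hneg
  · exact hone
  · linarith

theorem sum_E_commute_T3 (a b c θ₁ θ₂ θ₃ : ℝ) :
    Commute (a • E 0 1 + b • E 2 3 + c • E 4 5) (T3 θ₁ θ₂ θ₃) := by
  ext i j
  fin_cases i <;> fin_cases j <;> simp [T3, E, mul_apply] <;> ring

/-- A matrix in the `SO(6)`-orbit of `J₀` commutes with every maximal torus
element iff it is `ε₁E₁₂ + ε₂E₃₄ + ε₃E₅₆` with `ε₁ε₂ε₃ = 1`; these are the four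
fixed points of the torus action, projecting to the vertices of the moment
tetrahedron. -/
theorem torus_fixed_points_acs (A : Matrix (Fin 6) (Fin 6) ℝ)
    (hA : ∃ P : Matrix (Fin 6) (Fin 6) ℝ, P * Pᵀ = 1 ∧ P.det = 1 ∧ A = P * J₀ * Pᵀ) :
    (∀ θ₁ θ₂ θ₃ : ℝ, A * T3 θ₁ θ₂ θ₃ = T3 θ₁ θ₂ θ₃ * A) ↔
      ∃ ε₁ ε₂ ε₃ : ℝ, (ε₁ = 1 ∨ ε₁ = -1) ∧ (ε₂ = 1 ∨ ε₂ = -1) ∧ (ε₃ = 1 ∨ ε₃ = -1) ∧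
        ε₁ * ε₂ * ε₃ = 1 ∧ A = ε₁ • E 0 1 + ε₂ • E 2 3 + ε₃ • E 4 5 := by
  obtain ⟨P, hP, hdet, rfl⟩ := hA
  constructor
  · intro h
    have hform := eq_sum_E_of_commute_sign_diagonals (conj_J₀_transpose P)
      (T3_pi_zero_zero ▸ h Real.pi 0 0) (T3_zero_pi_zero ▸ h 0 Real.pi 0)
    obtain ⟨ha, hb, hc⟩ :=
      mul_self_eq_one_of_sum_E_mul_self_eq_neg_one (hform ▸ conj_J₀_mul_self hP)
    exact ⟨_, _, _, mul_self_eq_one_iff.mp ha, mul_self_eq_one_iff.mp hb,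
      mul_self_eq_one_iff.mp hc, prod_eq_one_of_conj_J₀_eq_sum_E hP hdet ha hb hc hform, hform⟩
  · rintro ⟨ε₁, ε₂, ε₃, -, -, -, -, hform⟩ θ₁ θ₂ θ₃
    rw [hform]
    exact sum_E_commute_T3 ε₁ ε₂ ε₃ θ₁ θ₂ θ₃
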